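/- Let η₃ ∈ (0,1) be a constant with r·ln(1−p) + η₃ > 0. Then ∑_{S=⌈n·η₃⌉}^{n} Φ_n(S) → 0 as n → ∞. -/

import Mathlib

open Filter Finset

/-- Domain size `d = n^α` of Model RB. -/
noncomputable def dRB (α : ℝ) (n : ℕ) : ℝ := (n : ℝ) ^ α

/-- `m = n · ln d`. -/
noncomputable def mRB (α : ℝ) (n : ℕ) : ℝ := (n : ℝ) * Real.log (dRB α n)

/-- `f_n(s) = 1 + (p/(1-p)) (s^k - d^{-k})/(1 - d^{-k})`. -/
noncomputable def fRB (α p : ℝ) (k n : ℕ) (s : ℝ) : ℝ :=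
  1 + (p / (1 - p)) * (s ^ k - dRB α n ^ (-(k : ℝ))) / (1 - dRB α n ^ (-(k : ℝ)))

/-- `B_n(S) = C(n,S) (1/d)^S (1-1/d)^{n-S}`. -/
noncomputable def BRB (α : ℝ) (n S : ℕ) : ℝ :=
  (n.choose S : ℝ) * (1 / dRB α n) ^ S * (1 - 1 / dRB α n) ^ (n - S)

/-- `W_n(S) = f_n(S/n)^{r m}`. -/
noncomputable def WRB (α p r : ℝ) (k n S : ℕ) : ℝ :=
  fRB α p k n ((S : ℝ) / (n : ℝ)) ^ (r * mRB α n)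

/-- `Φ_n(S) = B_n(S) W_n(S)`. -/
noncomputable def PhiRB (α p r : ℝ) (k n S : ℕ) : ℝ := BRB α n S * WRB α p r k n S

/-- `g(s) = -k(k-1)(1-s)s^{k-1}/2`. -/
noncomputable def gRB (k : ℕ) (s : ℝ) : ℝ :=
  -((k : ℝ) * ((k : ℝ) - 1)) * (1 - s) * s ^ (k - 1) / 2

/-- `η₁(n) = 1/d + λ/(n^{1-(k-1)α} ln d)`. -/
noncomputable def eta1 (α lam : ℝ) (k n : ℕ) : ℝ :=
  1 / dRB α n + lam / ((n : ℝ) ^ (1 - ((k : ℝ) - 1) * α) * Real.log (dRB α n))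

/-- First moment `E[X] = d^n (1-p)^{r m}`. -/
noncomputable def E1RB (α p r : ℝ) (n : ℕ) : ℝ := dRB α n ^ n * (1 - p) ^ (r * mRB α n)

/-- Second moment `E[X²]`. -/
noncomputable def E2RB (α p r : ℝ) (k n : ℕ) : ℝ :=
  ∑ S ∈ Finset.range (n + 1),
    dRB α n ^ n * (n.choose S : ℝ) * (dRB α n - 1) ^ (n - S) *
      ((1 - p) * ((S.choose k : ℝ) / (n.choose k : ℝ)) +
        ((1 - p) ^ 2 - p * (1 - p) * dRB α n ^ (-(k : ℝ)) / (1 - dRB α n ^ (-(k : ℝ)))) *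
          (1 - (S.choose k : ℝ) / (n.choose k : ℝ))) ^ (r * mRB α n)

/-! For `S ≥ n η₃` and `n` so large that `d^{-k} ≤ η₃^k ≤ (S/n)^k`, we get
`1 ≤ f_n(S/n) ≤ 1/(1-p)`, hence `W_n(S) ≤ e^{-r ln(1-p) m}`, while
`B_n(S) ≤ 2^n d^{-S} ≤ 2^n e^{-η₃ m}`. So each summand is at most `2^n e^{-(η₃ + r ln(1-p)) m}`,
and as `m = α n ln n` this decay beats both the factor `2^n` and the `n + 1` summands. -/

open Real Topology

lemma binomial_term_le_two_pow_mul {x : ℝ} (hx0 : 0 ≤ x) (hx1 : x ≤ 1) (n S : ℕ) :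
    (n.choose S : ℝ) * x ^ S * (1 - x) ^ (n - S) ≤ 2 ^ n * x ^ S := by
  calc (n.choose S : ℝ) * x ^ S * (1 - x) ^ (n - S) ≤ (n.choose S : ℝ) * x ^ S :=
        mul_le_of_le_one_right (by positivity) (pow_le_one₀ (by linarith) (by linarith))
    _ ≤ 2 ^ n * x ^ S := by gcongr; exact_mod_cast Nat.choose_le_two_pow n S

lemma one_le_one_add_mul_sub_div {q t u : ℝ} (hq : 0 ≤ q) (htu : t ≤ u) (hu : u ≤ 1) :
    1 ≤ 1 + q * (u - t) / (1 - t) := by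
  have : 0 ≤ q * (u - t) / (1 - t) := div_nonneg (mul_nonneg hq (by linarith)) (by linarith)
  linarith

lemma one_add_mul_sub_div_le {q t u : ℝ} (hq : 0 ≤ q) (htu : t ≤ u) (hu : u ≤ 1) :
    1 + q * (u - t) / (1 - t) ≤ 1 + q := by
  rw [mul_div_assoc]
  gcongr
  exact mul_le_of_le_one_right hq (div_le_one_of_le₀ (by linarith) (by linarith))

section ModelRB

variable {α p r η : ℝ} {k n S : ℕ}

lemma one_le_dRB (hα : 0 ≤ α) (hn : 0 < n) : 1 ≤ dRB α n :=
  one_le_rpow (by exact_mod_cast hn) hα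

lemma mRB_eq (α : ℝ) (n : ℕ) : mRB α n = α * (n * log n) := by
  rcases n.eq_zero_or_pos with rfl | hn
  · simp [mRB]
  · rw [mRB, dRB, log_rpow (by exact_mod_cast hn)]
    ring

lemma tendsto_dRB_rpow_neg (hα : 0 < α) (hk : 0 < k) :
    Tendsto (fun n : ℕ => dRB α n ^ (-(k : ℝ))) atTop (𝓝 0) := by
  have hαk : 0 < α * k := mul_pos hα (by exact_mod_cast hk)
  refine ((tendsto_rpow_neg_atTop hαk).comp tendsto_natCast_atTop_atTop).congr fun n => ?_
  simp only [Function.comp_apply, dRB, ← rpow_mul (Nat.cast_nonneg n), mul_neg]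

lemma BRB_nonneg (hd : 1 ≤ dRB α n) : 0 ≤ BRB α n S := by
  have : 1 / dRB α n ≤ 1 := div_le_one_of_le₀ hd (by linarith)
  unfold BRB
  exact mul_nonneg (by positivity) (pow_nonneg (by linarith) _)

lemma BRB_le (hd : 1 ≤ dRB α n) (hSn : n * η ≤ S) :
    BRB α n S ≤ 2 ^ n * exp (-(η * mRB α n)) := by
  have hd0 : 0 < dRB α n := by linarith
  have hlog : 0 ≤ log (dRB α n) := log_nonneg hd
  calc BRB α n S ≤ 2 ^ n * (1 / dRB α n) ^ S :=
        binomial_term_le_two_pow_mul (by positivity) (div_le_one_of_le₀ hd (by linarith)) n S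
    _ = 2 ^ n * exp (-(S * log (dRB α n))) := by
        rw [one_div, inv_pow, ← exp_log (pow_pos hd0 S), log_pow, ← exp_neg]
    _ ≤ 2 ^ n * exp (-(η * mRB α n)) := by
        have : η * mRB α n ≤ S * log (dRB α n) := by rw [mRB]; nlinarith
        gcongr

lemma fRB_mem_Icc {s : ℝ} (hp0 : 0 ≤ p) (hp1 : p < 1)
    (ht : dRB α n ^ (-(k : ℝ)) ≤ s ^ k) (hs : s ^ k ≤ 1) :
    fRB α p k n s ∈ Set.Icc 1 (1 - p)⁻¹ := by
  have hq : 0 ≤ p / (1 - p) := div_nonneg hp0 (by linarith)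
  refine ⟨one_le_one_add_mul_sub_div hq ht hs, ?_⟩
  calc fRB α p k n s ≤ 1 + p / (1 - p) := one_add_mul_sub_div_le hq ht hs
    _ = (1 - p)⁻¹ := by field_simp [(sub_pos.2 hp1).ne']; ring

lemma WRB_nonneg_and_le (hp0 : 0 ≤ p) (hp1 : p < 1) (hr : 0 ≤ r) (hd : 1 ≤ dRB α n)
    (ht : dRB α n ^ (-(k : ℝ)) ≤ ((S : ℝ) / n) ^ k) (hs : (S : ℝ) / n ≤ 1) :
    0 ≤ WRB α p r k n S ∧ WRB α p r k n S ≤ exp (-(r * log (1 - p) * mRB α n)) := by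
  have hrm : 0 ≤ r * mRB α n :=
    mul_nonneg hr (mul_nonneg (Nat.cast_nonneg n) (log_nonneg hd))
  obtain ⟨hf1, hfp⟩ := fRB_mem_Icc hp0 hp1 ht (pow_le_one₀ (by positivity) hs)
  refine ⟨rpow_nonneg (by linarith) _, ?_⟩
  calc WRB α p r k n S ≤ (1 - p)⁻¹ ^ (r * mRB α n) := rpow_le_rpow (by linarith) hfp hrm
    _ = exp (-(r * log (1 - p) * mRB α n)) := by
        rw [rpow_def_of_pos (inv_pos.2 (by linarith)), log_inv]
        ring_nf

lemma PhiRB_nonneg_and_le (hp0 : 0 ≤ p) (hp1 : p < 1) (hr : 0 ≤ r) (hη : 0 ≤ η)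
    (hα : 0 ≤ α) (hn : 0 < n) (ht : dRB α n ^ (-(k : ℝ)) ≤ η ^ k)
    (hSη : n * η ≤ S) (hSn : S ≤ n) :
    0 ≤ PhiRB α p r k n S ∧
      PhiRB α p r k n S ≤ 2 ^ n * exp (-((η + r * log (1 - p)) * mRB α n)) := by
  have hn' : (0 : ℝ) < n := by exact_mod_cast hn
  have hd := one_le_dRB (n := n) hα hn
  have hsη : η ≤ (S : ℝ) / n := by rw [le_div_iff₀ hn']; linarith
  have hs1 : (S : ℝ) / n ≤ 1 := div_le_one_of_le₀ (by exact_mod_cast hSn) hn'.le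
  obtain ⟨hW0, hW⟩ := WRB_nonneg_and_le hp0 hp1 hr hd (ht.trans (by gcongr)) hs1
  refine ⟨mul_nonneg (BRB_nonneg hd) hW0, ?_⟩
  calc PhiRB α p r k n S
      ≤ 2 ^ n * exp (-(η * mRB α n)) * exp (-(r * log (1 - p) * mRB α n)) :=
        mul_le_mul (BRB_le hd hSη) hW hW0 (by positivity)
    _ = 2 ^ n * exp (-((η + r * log (1 - p)) * mRB α n)) := by
        rw [mul_assoc, ← exp_add]
        ring_nf

end ModelRB

lemma tendsto_succ_mul_two_pow_mul_exp_neg_mul_log {c : ℝ} (hc : 0 < c) :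
    Tendsto (fun n : ℕ => ((n : ℝ) + 1) * 2 ^ n * exp (-(c * (n * log n)))) atTop (𝓝 0) := by
  have hlog : Tendsto (fun n : ℕ => (n : ℝ) * (1 + log 2 - c * log n)) atTop atBot := by
    refine tendsto_natCast_atTop_atTop.atTop_mul_atBot₀ ?_
    simp only [sub_eq_add_neg]
    exact tendsto_atBot_add_const_left _ _ (tendsto_neg_atTop_atBot.comp
      ((tendsto_log_atTop.comp tendsto_natCast_atTop_atTop).const_mul_atTop hc))
  refine squeeze_zero (fun n => by positivity) (fun n => ?_) (tendsto_exp_atBot.comp hlog)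
  calc ((n : ℝ) + 1) * 2 ^ n * exp (-(c * (n * log n)))
      ≤ exp n * exp (n * log 2) * exp (-(c * (n * log n))) := by
        rw [← rpow_natCast, rpow_def_of_pos two_pos, mul_comm (log 2)]
        gcongr
        exact add_one_le_exp _
    _ = exp (n * (1 + log 2 - c * log n)) := by
        rw [← exp_add, ← exp_add]
        ring_nf

theorem stmt13_general (α p r η₃ : ℝ) (k : ℕ) (hα : 0 < α) (hk : 2 ≤ k)
    (hp0 : 0 < p) (hp1 : p < 1) (hr0 : 0 < r)
    (hη₃0 : 0 < η₃) (hη₃ : r * Real.log (1 - p) + η₃ > 0) :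
    Filter.Tendsto
      (fun n : ℕ => ∑ S ∈ Finset.Icc ⌈(n : ℝ) * η₃⌉₊ n, PhiRB α p r k n S)
      Filter.atTop (nhds 0) := by
  set c := η₃ + r * log (1 - p)
  have hsmall : ∀ᶠ n : ℕ in atTop, 0 < n ∧ dRB α n ^ (-(k : ℝ)) ≤ η₃ ^ k :=
    (eventually_gt_atTop 0).and ((tendsto_dRB_rpow_neg hα (by omega)).eventually_le_const
      (by positivity))
  have hPhi : ∀ᶠ n : ℕ in atTop, ∀ S ∈ Icc ⌈(n : ℝ) * η₃⌉₊ n,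
      0 ≤ PhiRB α p r k n S ∧ PhiRB α p r k n S ≤ 2 ^ n * exp (-(c * mRB α n)) := by
    filter_upwards [hsmall] with n ⟨hn, ht⟩ S hS
    exact PhiRB_nonneg_and_le hp0.le hp1 hr0.le hη₃0.le hα.le hn ht
      (Nat.ceil_le.mp (mem_Icc.mp hS).1) (mem_Icc.mp hS).2
  refine squeeze_zero' ?_ ?_ (tendsto_succ_mul_two_pow_mul_exp_neg_mul_log
    (c := c * α) (mul_pos (by linarith) hα))
  · filter_upwards [hPhi] with n hn
    exact sum_nonneg fun S hS => (hn S hS).1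
  · filter_upwards [hPhi] with n hn
    have hcard : ((Icc ⌈(n : ℝ) * η₃⌉₊ n).card : ℝ) ≤ n + 1 := by
      rw [Nat.card_Icc]; norm_cast; omega
    calc ∑ S ∈ Icc ⌈(n : ℝ) * η₃⌉₊ n, PhiRB α p r k n S
        ≤ (Icc ⌈(n : ℝ) * η₃⌉₊ n).card * (2 ^ n * exp (-(c * mRB α n))) := by
          simpa only [nsmul_eq_mul] using sum_le_card_nsmul _ _ _ fun S hS => (hn S hS).2
      _ ≤ (n + 1) * 2 ^ n * exp (-(c * α * (n * log n))) := by
          rw [mRB_eq, mul_assoc _ (2 ^ n : ℝ), mul_assoc c]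
          gcongr

/-- if η₃ ∈ (0,1) satisfies r ln(1-p) + η₃ > 0, then
∑_{S=⌈nη₃⌉}^{n} Φ_n(S) → 0. -/
theorem stmt13 (α p r τ η₃ : ℝ) (k : ℕ) (hα : 0 < α) (hk : 2 ≤ k)
    (hp0 : 0 < p) (hp1 : p < 1) (hτ : τ = 1 / (1 - p)) (hr0 : 0 < r)
    (hη₃0 : 0 < η₃) (hη₃1 : η₃ < 1) (hη₃ : r * Real.log (1 - p) + η₃ > 0) :
    Filter.Tendsto
      (fun n : ℕ => ∑ S ∈ Finset.Icc ⌈(n : ℝ) * η₃⌉₊ n, PhiRB α p r k n S)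
      Filter.atTop (nhds 0) :=
  stmt13_general α p r η₃ k hα hk hp0 hp1 hr0 hη₃0 hη₃
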